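/- Let T be a recursively pointed function tree and S a function tree with [S] ⊆ [T] and S ≤_T T. Then S is also recursively pointed and S ≡_T T. -/

import Mathlib

open scoped ENNReal

attribute [local instance] Classical.propDecidable

/-- Cantor space `2^ω`. -/
abbrev Cantor := ℕ → Bool

/-- The length-`n` initial segment `X↾n` of `X ∈ 2^ω`, as a finite binary string. -/
def seg (X : Cantor) (n : ℕ) : List Bool := (List.range n).map X

/-- `σ ≺ X` : the finite string `σ` is an initial segment of `X`. -/
def PrefixOfSeq (σ : List Bool) (X : Cantor) : Prop := seg X σ.length = σ

/-- The basic clopen set `[σ]` of all infinite sequences extending `σ`. -/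
def cyl (σ : List Bool) : Set Cantor := {X | PrefixOfSeq σ X}

/-- Partial recursive functions relative to a (total) oracle `O : ℕ → ℕ`:
the oracle version of `Nat.Partrec`. -/
inductive RecursiveInFn (O : ℕ → ℕ) : (ℕ →. ℕ) → Prop
  | oracle : RecursiveInFn O (fun n => Part.some (O n))
  | zero : RecursiveInFn O (pure 0)
  | succ : RecursiveInFn O Nat.succ
  | left : RecursiveInFn O ↑fun n : ℕ => n.unpair.1
  | right : RecursiveInFn O ↑fun n : ℕ => n.unpair.2
  | pair {f g} : RecursiveInFn O f → RecursiveInFn O g →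
      RecursiveInFn O fun n => Nat.pair <$> f n <*> g n
  | comp {f g} : RecursiveInFn O f → RecursiveInFn O g →
      RecursiveInFn O fun n => g n >>= f
  | prec {f g} : RecursiveInFn O f → RecursiveInFn O g →
      RecursiveInFn O (Nat.unpaired fun a n =>
        n.rec (f a) fun y IH => do let i ← IH; g (Nat.pair a (Nat.pair y i)))
  | rfind {f} : RecursiveInFn O f →
      RecursiveInFn O fun a => Nat.rfind fun n => (fun m => m = 0) <$> f (Nat.pair a n)

/-- A (total) function between coded types is recursive in the oracle `O`. -/
def RecIn {α β : Type} [Primcodable α] [Primcodable β] (O : ℕ → ℕ) (f : α → β) : Prop :=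
  RecursiveInFn O fun n =>
    (Part.ofOption (Encodable.decode (α := α) n)).bind fun a => Part.some (Encodable.encode (f a))

/-- A set `X ∈ 2^ω` viewed as a total oracle. -/
def oracleOf (X : Cantor) : ℕ → ℕ := fun n => cond (X n) 1 0

/-- A function between coded types viewed as a total oracle on `ℕ`. -/
def oracleFn {α β : Type} [Primcodable α] [Primcodable β] (f : α → β) : ℕ → ℕ :=
  fun n => Encodable.encode ((Encodable.decode (α := α) n).map f)

/-- Turing reducibility `X ≤_T Y` between elements of `2^ω`. -/
def TRed (X Y : Cantor) : Prop := RecIn (oracleOf Y) X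

/-- Turing equivalence `X ≡_T Y`. -/
def TEquiv (X Y : Cantor) : Prop := TRed X Y ∧ TRed Y X

/-- The Turing degree of `Z`, as a set of reals. -/
def degCl (Z : Cantor) : Set Cantor := {Y | TEquiv Y Z}

/-- Many-one reducibility `X ≤_m Y` between subsets of `ω` (as elements of `2^ω`). -/
def ManyOneRed (X Y : Cantor) : Prop := ∃ g : ℕ → ℕ, Computable g ∧ ∀ n, X n = Y (g n)

/-- The recursive join `A ⊕ B`. -/
def join (A B : Cantor) : Cantor := fun n => if n % 2 = 0 then A (n / 2) else B (n / 2)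

/-- `X` is of minimal Turing degree. -/
def MinimalDeg (X : Cantor) : Prop :=
  ¬Computable X ∧ ∀ Y : Cantor, TRed Y X → Computable Y ∨ TRed X Y

/-- `B` is a minimal cover of the countable class `S`: `B` strictly bounds every member of `S`,
and everything below `B` is either below some member of `S` or joins with one above `B`. -/
def MinimalCoverOf (B : Cantor) (S : Set Cantor) : Prop :=
  (∀ A ∈ S, TRed A B ∧ ¬TRed B A) ∧
  ∀ C : Cantor, TRed C B → ∃ A ∈ S, TRed C A ∨ TRed B (join A C)

/-- `R` is of hyperimmune-free degree: every function it computes is dominated by a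
computable function. -/
def HypImmFree (R : Cantor) : Prop :=
  ∀ f : ℕ → ℕ, RecIn (oracleOf R) f → ∃ g : ℕ → ℕ, Computable g ∧ ∀ n, f n ≤ g n

/-- `d` is a supermartingale. -/
def IsSupermartingale (d : List Bool → ℝ) : Prop :=
  (∀ σ, 0 ≤ d σ) ∧ ∀ σ, d (σ ++ [false]) + d (σ ++ [true]) ≤ 2 * d σ

/-- `d` is a martingale. -/
def IsMartingale (d : List Bool → ℝ) : Prop :=
  (∀ σ, 0 ≤ d σ) ∧ ∀ σ, d (σ ++ [false]) + d (σ ++ [true]) = 2 * d σ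

/-- `d` is lower semicomputable (r.e.) relative to oracle `O`: it is the monotone limit of a
uniformly `O`-recursive sequence of rationals. -/
def LowerSemicomputableIn (O : ℕ → ℕ) (d : List Bool → ℝ) : Prop :=
  ∃ q : List Bool × ℕ → ℚ, RecIn O q ∧ (∀ σ, Monotone fun n => q (σ, n)) ∧
    ∀ σ, Filter.Tendsto (fun n => (q (σ, n) : ℝ)) Filter.atTop (nhds (d σ))

/-- `d` is lower semicomputable (an r.e. supermartingale value function). -/
def LowerSemicomputable (d : List Bool → ℝ) : Prop :=
  ∃ q : List Bool × ℕ → ℚ, Computable q ∧ (∀ σ, Monotone fun n => q (σ, n)) ∧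
    ∀ σ, Filter.Tendsto (fun n => (q (σ, n) : ℝ)) Filter.atTop (nhds (d σ))

/-- `d` `s`-succeeds on `X`: `limsup_n d(X↾n)/2^{(1-s)n} = ∞`
(equivalently, the sequence is unbounded). -/
def Succeeds (d : List Bool → ℝ) (s : ℚ) (X : Cantor) : Prop :=
  ∀ C : ℝ, ∃ n : ℕ, C * (2 : ℝ) ^ ((1 - (s : ℝ)) * n) ≤ d (seg X n)

/-- `d` strongly `s`-succeeds on `X`: `liminf_n d(X↾n)/2^{(1-s)n} = ∞`. -/
def SucceedsStrongly (d : List Bool → ℝ) (s : ℚ) (X : Cantor) : Prop :=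
  ∀ C : ℝ, ∃ N : ℕ, ∀ n ≥ N, C * (2 : ℝ) ^ ((1 - (s : ℝ)) * n) ≤ d (seg X n)

/-- Generic dimension notion: the infimum of all `s ∈ ℚ ∩ [0,1]` such that some supermartingale
satisfying `P` succeeds (in the sense of `Succ`) on every member of `A` (with value `1` if there
is no such `s`). -/
noncomputable def dimVia (P : (List Bool → ℝ) → Prop)
    (Succ : (List Bool → ℝ) → ℚ → Cantor → Prop) (A : Set Cantor) : ℝ≥0∞ :=
  sInf ({1} ∪ {x : ℝ≥0∞ | ∃ s : ℚ, 0 ≤ s ∧ s ≤ 1 ∧ x = ENNReal.ofReal (s : ℝ) ∧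
    ∃ d, IsSupermartingale d ∧ P d ∧ ∀ X ∈ A, Succ d s X})

/-- Effective Hausdorff dimension of a class (Lutz). -/
noncomputable def effDim (A : Set Cantor) : ℝ≥0∞ := dimVia LowerSemicomputable Succeeds A

/-- Effective Hausdorff dimension relative to oracle `O`. -/
noncomputable def effDimIn (O : ℕ → ℕ) (A : Set Cantor) : ℝ≥0∞ :=
  dimVia (LowerSemicomputableIn O) Succeeds A

/-- Effective packing dimension of a class. -/
noncomputable def effPDim (A : Set Cantor) : ℝ≥0∞ := dimVia LowerSemicomputable SucceedsStrongly A

/-- Effective packing dimension relative to oracle `O`. -/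
noncomputable def effPDimIn (O : ℕ → ℕ) (A : Set Cantor) : ℝ≥0∞ :=
  dimVia (LowerSemicomputableIn O) SucceedsStrongly A

/-- (Classical) Hausdorff dimension of a subset of `2^ω`, via the point-to-set principle:
the infimum over all oracles `Z` of the effective-in-`Z` Hausdorff dimension. -/
noncomputable def hausdorffDim (A : Set Cantor) : ℝ≥0∞ := ⨅ Z : Cantor, effDimIn (oracleOf Z) A

/-- (Classical) packing dimension of a subset of `2^ω`, via the point-to-set principle. -/
noncomputable def packingDim (A : Set Cantor) : ℝ≥0∞ := ⨅ Z : Cantor, effPDimIn (oracleOf Z) A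

/-- The canonical enumeration `n ↦ D_n` of finite subsets of `ω`: `D_n` is the set of
positions of 1-bits in the binary expansion of `n`. -/
def Dfin (n : ℕ) : Finset ℕ := (Finset.range n).filter fun i => n.testBit i = true

/-- `A` is recursively traceable. -/
def RecTraceable (A : Cantor) : Prop :=
  ∃ b : ℕ → ℕ, Computable b ∧ ∀ f : ℕ → ℕ, RecIn (oracleOf A) f →
    ∃ g : ℕ → ℕ, Computable g ∧ ∀ n, (Dfin (g n)).card ≤ b n ∧ f n ∈ Dfin (g n)

/-- A function tree: `T(σi)` properly extends `T(σ)`, and `T(σ0)`, `T(σ1)` are incomparable. -/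
structure FunTree where
  f : List Bool → List Bool
  extend : ∀ σ (i : Bool), f σ <+: f (σ ++ [i]) ∧ (f σ).length < (f (σ ++ [i])).length
  split : ∀ σ, ¬ f (σ ++ [false]) <+: f (σ ++ [true]) ∧ ¬ f (σ ++ [true]) <+: f (σ ++ [false])

/-- `[T]`, the set of infinite paths through the function tree `T`. -/
def Paths (T : FunTree) : Set Cantor :=
  {X | ∃ Y : Cantor, ∀ n, PrefixOfSeq (T.f (seg Y n)) X}

/-- `T ≤_T Y` for a function tree `T` and a real `Y`. -/
def TreeRedToReal (T : FunTree) (Y : Cantor) : Prop := RecIn (oracleOf Y) T.f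

/-- `Y ≤_T T` for a real `Y` and a function tree `T` (the tree used as an oracle). -/
def RealRedToTree (Y : Cantor) (T : FunTree) : Prop := RecIn (oracleFn T.f) Y

/-- `S ≤_T T` between function trees. -/
def TreeRedToTree (S T : FunTree) : Prop := RecIn (oracleFn T.f) S.f

/-- `T` is recursively pointed: every path of `T` computes `T`. -/
def RecPointed (T : FunTree) : Prop := ∀ X ∈ Paths T, TreeRedToReal T X

/-- The binary value of a string (read most-significant-bit first); strings of equal
length are lexicographically ordered exactly as their values. -/
def natOfStr (σ : List Bool) : ℕ := σ.foldl (fun a b => 2 * a + cond b 1 0) 0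

/-- The length-`len` binary string with value `k`. -/
def strOfNat (len k : ℕ) : List Bool := (List.range len).map fun i => k.testBit (len - 1 - i)

/-- `l(σ) = Σ_{|τ|=|σ|, τ <_L σ} ν([τ])`, computed via the value correspondence between the
lexicographic order on strings of equal length and the numeric order of their values. -/
noncomputable def lfun (ν : MeasureTheory.Measure Cantor) (σ : List Bool) : ℝ :=
  ∑ k ∈ Finset.range (natOfStr σ), (ν (cyl (strOfNat σ.length k))).toReal

/-- `r(σ) = l(σ) + ν([σ])`. -/
noncomputable def rfun (ν : MeasureTheory.Measure Cantor) (σ : List Bool) : ℝ :=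
  lfun ν σ + (ν (cyl σ)).toReal

/-- `0.A`: the real number in `[0,1]` with binary expansion `A`. -/
noncomputable def realOf (A : Cantor) : ℝ := ∑' n : ℕ, cond (A n) ((2 : ℝ)⁻¹ ^ (n + 1)) 0

/-- The weight `2^{-|σ|}` of an (optional) string, for measuring Martin-Löf tests. -/
noncomputable def testWeight : Option (List Bool) → ℝ≥0∞
  | none => 0
  | some σ => (2 : ℝ≥0∞)⁻¹ ^ σ.length

/-- `V` is a Martin-Löf test: a uniformly computable enumeration whose `n`-th level has
total weight at most `2^{-n}`. -/
def MLTest (V : ℕ × ℕ → Option (List Bool)) : Prop :=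
  Computable V ∧ ∀ n, (∑' k : ℕ, testWeight (V (n, k))) ≤ (2 : ℝ≥0∞)⁻¹ ^ n

/-- `X` is covered by the test `V` (belongs to every level). -/
def MLCovered (V : ℕ × ℕ → Option (List Bool)) (X : Cantor) : Prop :=
  ∀ n, ∃ k σ, V (n, k) = some σ ∧ PrefixOfSeq σ X

/-- `X` is 1-random (Martin-Löf random). -/
def MLRandom (X : Cantor) : Prop := ∀ V, MLTest V → ¬MLCovered V X

/-- An antichain of Turing degrees (containing no computable set, closed under Turing
equivalence, with Turing-inequivalent members pairwise incomparable). -/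
def IsAntichainDeg (B : Set Cantor) : Prop :=
  (∀ X ∈ B, ¬Computable X) ∧ (∀ X ∈ B, ∀ Y, TEquiv Y X → Y ∈ B) ∧
  ∀ X ∈ B, ∀ Y ∈ B, ¬TEquiv X Y → ¬TRed X Y ∧ ¬TRed Y X

/-- A maximal antichain of Turing degrees. -/
def MaximalAntichainDeg (B : Set Cantor) : Prop :=
  IsAntichainDeg B ∧ ∀ Z ∉ B, ¬IsAntichainDeg (B ∪ degCl Z)

/-- A chain of Turing degrees. -/
def IsChainDeg (A : Set Cantor) : Prop :=
  (∀ X ∈ A, ∀ Y, TEquiv Y X → Y ∈ A) ∧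
  ∀ X ∈ A, ∀ Y ∈ A, ¬TEquiv X Y → TRed X Y ∨ TRed Y X

/-- A maximal chain of Turing degrees. -/
def MaximalChainDeg (A : Set Cantor) : Prop :=
  IsChainDeg A ∧ ∀ Z ∉ A, ¬IsChainDeg (A ∪ degCl Z)

/-- The first uncountable ordinal `ω₁`. -/
noncomputable def omega1 : Ordinal := (Cardinal.aleph 1).ord

/-
The leftmost path of `S` is computable from `S` and lies in `[S] ⊆ [T]`, so it computes `T`
because `T` is recursively pointed; hence `T ≤_T S`. Conversely every path `X` of `S` is a path
of `T`, so `S ≤_T T ≤_T X`.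
-/

open Encodable

theorem recursiveInFn_iff_natRecursiveIn {O : ℕ → ℕ} {f : ℕ →. ℕ} :
    RecursiveInFn O f ↔ Nat.RecursiveIn {fun n => Part.some (O n)} f := by
  constructor
  · intro hf
    induction hf with
    | oracle => exact .oracle _ rfl
    | zero => exact .zero
    | succ => exact .succ
    | left => exact .left
    | right => exact .right
    | pair _ _ ihf ihg => exact .pair ihf ihg
    | comp _ _ ihf ihg => exact .comp ihf ihg
    | prec _ _ ihf ihg => exact .prec ihf ihg
    | rfind _ ihf => exact .rfind ihf
  · intro hf
    induction hf with
    | oracle g hg => rw [Set.mem_singleton_iff.mp hg]; exact .oracle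
    | zero => exact .zero
    | succ => exact .succ
    | left => exact .left
    | right => exact .right
    | pair _ _ ihf ihg => exact .pair ihf ihg
    | comp _ _ ihf ihg => exact .comp ihf ihg
    | prec _ _ ihf ihg => exact .prec ihf ihg
    | rfind _ ihf => exact .rfind ihf

theorem RecursiveInFn.of_eq {O : ℕ → ℕ} {f g : ℕ →. ℕ} (hf : RecursiveInFn O f)
    (H : ∀ n, f n = g n) : RecursiveInFn O g :=
  funext H ▸ hf

theorem Nat.Partrec.recursiveInFn {O : ℕ → ℕ} {f : ℕ →. ℕ} (hf : Nat.Partrec f) :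
    RecursiveInFn O f :=
  recursiveInFn_iff_natRecursiveIn.mpr hf.recursiveIn

section RecIn

variable {α β γ : Type} [Primcodable α] [Primcodable β] [Primcodable γ] {O O' : ℕ → ℕ}

theorem recIn_nat_iff {f : ℕ → ℕ} : RecIn O f ↔ RecursiveInFn O fun n => Part.some (f n) := by
  simp [RecIn, Part.ofOption]

theorem recIn_oracle : RecIn O O := recIn_nat_iff.mpr .oracle

theorem RecIn.trans {f : α → β} (hf : RecIn O' f) (hO' : RecIn O O') : RecIn O f := by
  refine recursiveInFn_iff_natRecursiveIn.mpr
    (Nat.RecursiveIn.subst (recursiveInFn_iff_natRecursiveIn.mp hf) fun g hg => ?_)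
  rw [Set.mem_singleton_iff.mp hg]
  exact recursiveInFn_iff_natRecursiveIn.mp (recIn_nat_iff.mp hO')

theorem Computable.recIn {f : α → β} (hf : Computable f) : RecIn O f := by
  have : Nat.Partrec _ := hf
  simpa [RecIn, Part.ofOption] using this.recursiveInFn (O := O)

theorem RecIn.comp {g : β → γ} {f : α → β} (hg : RecIn O g) (hf : RecIn O f) :
    RecIn O fun a => g (f a) := by
  refine (RecursiveInFn.comp hg hf).of_eq fun n => ?_
  cases decode (α := α) n <;> simp [Part.ofOption]

theorem RecIn.pair {f : α → β} {g : α → γ} (hf : RecIn O f) (hg : RecIn O g) :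
    RecIn O fun a => (f a, g a) := by
  refine (RecursiveInFn.pair hf hg).of_eq fun n => ?_
  cases decode (α := α) n <;> simp [Part.ofOption, Seq.seq]

theorem RecIn.optionMap [Inhabited α] {f : α → β} (hf : RecIn O f) :
    RecIn O (Option.map f) := by
  -- evaluating `f` at a default value on `none` avoids a case split on partial values
  have hsel : Computable fun p : Bool × β => cond p.1 (some p.2) none :=
    Computable.cond Computable.fst (Computable.option_some.comp Computable.snd)
      (Computable.const none)
  have hdef : RecIn O fun o : Option α => (o.isSome, f (o.getD default)) :=
    Primrec.option_isSome.to_comp.recIn.pair (hf.comp Primrec.option_getD_default.to_comp.recIn)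
  convert hsel.recIn.comp hdef using 1
  funext o
  cases o <;> rfl

theorem RecIn.oracleOf {X : Cantor} (hX : RecIn O X) : RecIn O (oracleOf X) := by
  have hbit : Computable fun b : Bool => cond b 1 0 :=
    Computable.cond Computable.id (Computable.const 1) (Computable.const 0)
  exact hbit.recIn.comp hX

theorem RecIn.oracleFn [Inhabited α] {f : α → β} (hf : RecIn O f) : RecIn O (oracleFn f) :=
  Computable.encode.recIn.comp (hf.optionMap.comp Computable.decode.recIn)

theorem recIn_oracleFn_self [Inhabited β] (f : α → β) : RecIn (oracleFn f) f := by
  -- `oracleFn f (encode a) = encode (f a) + 1`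
  have hread : Computable fun m : ℕ => ((decode (α := β) (m - 1)).getD default) :=
    Primrec.option_getD_default.to_comp.comp (Computable.decode.comp Primrec.pred.to_comp)
  convert hread.recIn.comp (recIn_oracle.comp Computable.encode.recIn) using 1
  funext a
  simp [_root_.oracleFn]

end RecIn

theorem seg_succ (X : Cantor) (n : ℕ) : seg X (n + 1) = seg X n ++ [X n] := by
  simp [seg, List.range_succ]

theorem length_seg (X : Cantor) (n : ℕ) : (seg X n).length = n := by
  simp [seg]

theorem prefixOfSeq_of_chain {c : ℕ → List Bool} (hc : ∀ n, c n <+: c (n + 1))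
    (hlen : ∀ n, n ≤ (c n).length) (n : ℕ) :
    PrefixOfSeq (c n) fun i => (c (i + 1)).getD i false := by
  have hmono : ∀ {m k}, m ≤ k → c m <+: c k := fun h =>
    Nat.le_induction List.prefix_rfl (fun k _ ih => ih.trans (hc k)) _ h
  refine List.ext_getElem (length_seg _ _) fun i hi hin => ?_
  have hi' : i < (c (i + 1)).length := Nat.lt_of_lt_of_le (Nat.lt_succ_self i) (hlen _)
  simp only [seg, List.getElem_map, List.getElem_range, List.getD_eq_getElem _ _ hi']
  rw [(hmono (le_max_left (i + 1) n)).getElem hi', (hmono (le_max_right (i + 1) n)).getElem hin]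

namespace FunTree

def pathAlong (T : FunTree) (Y : Cantor) : Cantor := fun i => (T.f (seg Y (i + 1))).getD i false

theorem le_length_f_seg (T : FunTree) (Y : Cantor) (n : ℕ) : n ≤ (T.f (seg Y n)).length := by
  induction n with
  | zero => exact Nat.zero_le _
  | succ n ih => rw [seg_succ]; exact Nat.succ_le_of_lt (ih.trans_lt (T.extend _ _).2)

theorem pathAlong_mem_paths (T : FunTree) (Y : Cantor) : T.pathAlong Y ∈ Paths T :=
  ⟨Y, prefixOfSeq_of_chain (fun n => seg_succ Y n ▸ (T.extend _ _).1) (T.le_length_f_seg Y)⟩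

theorem recIn_pathAlong (T : FunTree) {Y : Cantor} (hY : Primrec Y) :
    RecIn (oracleFn T.f) (T.pathAlong Y) := by
  have hseg : Primrec (seg Y ∘ Nat.succ) :=
    Primrec.list_map (Primrec.list_range.comp Primrec.succ) (hY.comp Primrec.snd).to₂
  have hbit : Computable fun p : ℕ × List Bool => p.2.getD p.1 false :=
    (Primrec.list_getD false).to_comp.comp Computable.snd Computable.fst
  exact hbit.recIn.comp (Computable.id.recIn.pair
    ((recIn_oracleFn_self T.f).comp hseg.to_comp.recIn))

end FunTree

/-- if `T` is recursively pointed, `S` is a function tree with `[S] ⊆ [T]` and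
`S ≤_T T`, then `S` is recursively pointed and `S ≡_T T`. -/
theorem stmt8 (T S : FunTree) (hT : RecPointed T) (hsub : Paths S ⊆ Paths T)
    (hST : TreeRedToTree S T) :
    RecPointed S ∧ TreeRedToTree S T ∧ TreeRedToTree T S := by
  have hleft : S.pathAlong (fun _ => false) ∈ Paths S := S.pathAlong_mem_paths _
  have hTS : TreeRedToTree T S :=
    (hT _ (hsub hleft)).trans (S.recIn_pathAlong (Primrec.const false)).oracleOf
  exact ⟨fun X hX => hST.trans (hT X (hsub hX)).oracleFn, hST, hTS⟩
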